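/- Let V be a real vector space of finite dimension d, let Λ ⊆ V be a full lattice, and set A = V/Λ. Let a, b be positive integers. Then the kernel of the group homomorphism μ_{b,a}: A × A → A × A, (z, t) ↦ (b·z + a·t, z − t), is finite and has exactly (a+b)^d elements. -/

import Mathlib

/-!
A pair `(z, t)` lies in the kernel of `μ_{b,a}` exactly when `t = z` and `(a + b) • z = 0`, so the
kernel is a copy of the `n`-torsion of `V ⧸ Λ`, `n = a + b`. Dividing by `n` identifies that torsion
with `(1/n)Λ ⧸ Λ ≅ Λ ⧸ nΛ`, and a `ℤ`-basis of `Λ` identifies `Λ ⧸ nΛ` with `(ℤ/n)^d`.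
-/

namespace Module.Basis

variable {ι M : Type*} [Finite ι] [AddCommGroup M] (bM : Basis ι ℤ M) (n : ℕ)

noncomputable def coordsMod : M →+ (ι → ZMod n) :=
  ((Int.castAddHom (ZMod n)).compLeft ι).comp bM.equivFun.toAddMonoidHom

theorem coordsMod_apply (x : M) (i : ι) : bM.coordsMod n x i = (bM.equivFun x i : ZMod n) := rfl

theorem coordsMod_surjective : Function.Surjective (bM.coordsMod n) := by
  intro c
  choose m hm using fun i => ZMod.intCast_surjective (c i)
  refine ⟨bM.equivFun.symm m, funext fun i => ?_⟩
  rw [coordsMod_apply, LinearEquiv.apply_symm_apply, hm]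

theorem coordsMod_eq_zero_iff (x : M) : bM.coordsMod n x = 0 ↔ ∃ y : M, n • y = x := by
  simp only [funext_iff, coordsMod_apply, Pi.zero_apply, ZMod.intCast_zmod_eq_zero_iff_dvd]
  constructor
  · intro hdvd
    refine ⟨bM.equivFun.symm fun i => bM.equivFun x i / n, bM.equivFun.injective ?_⟩
    ext i
    rw [map_nsmul, LinearEquiv.apply_symm_apply, Pi.smul_apply, nsmul_eq_mul,
      Int.mul_ediv_cancel' (hdvd i)]
  · rintro ⟨y, rfl⟩ i
    simp

end Module.Basis

section MuKernel

variable {A : Type*} [AddCommGroup A]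

theorem mu_eq_zero_iff (a b : ℕ) (z t : A) :
    (b • z + a • t, z - t) = (0 : A × A) ↔ t = z ∧ (a + b) • z = 0 := by
  rw [Prod.mk_eq_zero, sub_eq_zero, eq_comm (a := z)]
  constructor
  · rintro ⟨h, rfl⟩
    exact ⟨rfl, by rwa [add_nsmul, add_comm]⟩
  · rintro ⟨rfl, h⟩
    exact ⟨by rwa [add_nsmul, add_comm] at h, rfl⟩

def muKernelEquivTorsion (a b : ℕ) :
    {p : A × A | (b • p.1 + a • p.2, p.1 - p.2) = (0 : A × A)} ≃ {z : A | (a + b) • z = 0} where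
  toFun p := ⟨p.1.1, ((mu_eq_zero_iff a b _ _).mp p.2).2⟩
  invFun z := ⟨(z.1, z.1), (mu_eq_zero_iff a b _ _).mpr ⟨rfl, z.2⟩⟩
  left_inv := by
    rintro ⟨⟨z, t⟩, hp⟩
    obtain ⟨rfl, -⟩ := (mu_eq_zero_iff a b z t).mp hp
    rfl
  right_inv _ := rfl

end MuKernel

namespace AddSubgroup

variable (K : Type*) {V : Type*} [DivisionRing K] [CharZero K] [AddCommGroup V] [Module K V]
  (Λ : AddSubgroup V) {n : ℕ}

theorem inv_natCast_smul_nsmul (hn : n ≠ 0) (v : V) : (n : K)⁻¹ • (n • v) = v := by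
  rw [← Nat.cast_smul_eq_nsmul K, inv_smul_smul₀ (Nat.cast_ne_zero.mpr hn)]

theorem nsmul_inv_natCast_smul (hn : n ≠ 0) (v : V) : n • ((n : K)⁻¹ • v) = v := by
  rw [← Nat.cast_smul_eq_nsmul K, smul_inv_smul₀ (Nat.cast_ne_zero.mpr hn)]

def divNatMk (n : ℕ) : Λ →+ V ⧸ Λ where
  toFun x := ((n : K)⁻¹ • (x : V) : V)
  map_zero' := by simp
  map_add' x y := by simp [smul_add]

omit [CharZero K] in
theorem divNatMk_apply (n : ℕ) (x : Λ) : divNatMk K Λ n x = ((n : K)⁻¹ • (x : V) : V) := rfl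

theorem range_divNatMk (hn : n ≠ 0) : (divNatMk K Λ n).range = {z : V ⧸ Λ | n • z = 0} := by
  ext z
  constructor
  · rintro ⟨x, rfl⟩
    rw [Set.mem_ofPred_eq, divNatMk_apply, ← QuotientAddGroup.mk_nsmul, nsmul_inv_natCast_smul K hn,
      QuotientAddGroup.eq_zero_iff]
    exact x.2
  · induction z using QuotientAddGroup.induction_on with | H v => ?_
    intro hv
    rw [Set.mem_ofPred_eq, ← QuotientAddGroup.mk_nsmul, QuotientAddGroup.eq_zero_iff] at hv
    exact ⟨⟨n • v, hv⟩, by rw [divNatMk_apply, inv_natCast_smul_nsmul K hn]⟩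

theorem divNatMk_eq_zero_iff (hn : n ≠ 0) (x : Λ) : divNatMk K Λ n x = 0 ↔ ∃ y : Λ, n • y = x := by
  rw [divNatMk_apply, QuotientAddGroup.eq_zero_iff]
  constructor
  · intro hx
    exact ⟨⟨_, hx⟩, Subtype.ext (nsmul_inv_natCast_smul K hn _)⟩
  · rintro ⟨y, rfl⟩
    simp [inv_natCast_smul_nsmul K hn]

noncomputable def torsionEquivPiZMod {ι : Type*} [Finite ι] (bΛ : Module.Basis ι ℤ Λ)
    (hn : n ≠ 0) : {z : V ⧸ Λ | n • z = 0} ≃ (ι → ZMod n) :=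
  have hker : (divNatMk K Λ n).ker = (bΛ.coordsMod n).ker := by
    ext x
    rw [AddMonoidHom.mem_ker, AddMonoidHom.mem_ker, divNatMk_eq_zero_iff K Λ hn,
      bΛ.coordsMod_eq_zero_iff]
  (Equiv.setCongr (range_divNatMk K Λ hn).symm).trans <|
    (QuotientAddGroup.quotientKerEquivRange _).toEquiv.symm.trans <|
      (QuotientAddGroup.quotientAddEquivOfEq hker).toEquiv.trans
        (QuotientAddGroup.quotientKerEquivOfSurjective _ (bΛ.coordsMod_surjective n)).toEquiv

end AddSubgroup

theorem mu_kernel_card_of_quotient_by_lattice_general {V : Type*} [AddCommGroup V] [Module ℝ V]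
    (d : ℕ) (Λ : AddSubgroup V) (bΛ : Module.Basis (Fin d) ℤ Λ)
    (a b : ℕ) (ha : 0 < a) :
    {p : (V ⧸ Λ) × (V ⧸ Λ) | (b • p.1 + a • p.2, p.1 - p.2) = (0 : (V ⧸ Λ) × (V ⧸ Λ))}.Finite ∧
    Nat.card {p : (V ⧸ Λ) × (V ⧸ Λ) |
        (b • p.1 + a • p.2, p.1 - p.2) = (0 : (V ⧸ Λ) × (V ⧸ Λ))} = (a + b) ^ d := by
  have hn : a + b ≠ 0 := by omega
  have : NeZero (a + b) := ⟨hn⟩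
  let e := (muKernelEquivTorsion a b).trans (Λ.torsionEquivPiZMod ℝ bΛ hn)
  refine ⟨Set.finite_coe_iff.mp (Finite.of_equiv _ e.symm), ?_⟩
  rw [Nat.card_congr e, Nat.card_pi, Finset.prod_const, Nat.card_zmod, Finset.card_univ,
    Fintype.card_fin]

/-- Let `V` be a real vector space of finite dimension `d`, `Λ ⊆ V` a full lattice,
and `A = V ⧸ Λ`. For positive integers `a`, `b`, the kernel of the group homomorphism
`μ_{b,a} : A × A → A × A`, `(z, t) ↦ (b•z + a•t, z − t)`, is finite with exactly
`(a + b) ^ d` elements. -/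
theorem mu_kernel_card_of_quotient_by_lattice {V : Type*} [AddCommGroup V] [Module ℝ V]
    [FiniteDimensional ℝ V] (d : ℕ) (hdim : Module.finrank ℝ V = d)
    (Λ : AddSubgroup V) (bΛ : Module.Basis (Fin d) ℤ Λ)
    (hspan : Submodule.span ℝ (Λ : Set V) = ⊤)
    (a b : ℕ) (ha : 0 < a) (hb : 0 < b) :
    {p : (V ⧸ Λ) × (V ⧸ Λ) | (b • p.1 + a • p.2, p.1 - p.2) = (0 : (V ⧸ Λ) × (V ⧸ Λ))}.Finite ∧
    Nat.card {p : (V ⧸ Λ) × (V ⧸ Λ) |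
        (b • p.1 + a • p.2, p.1 - p.2) = (0 : (V ⧸ Λ) × (V ⧸ Λ))} = (a + b) ^ d :=
  mu_kernel_card_of_quotient_by_lattice_general d Λ bΛ a b ha
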